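/- arXiv:math/0212269 — 2 statements merged into one kernel-verified Lean document; each statement's English description precedes it below -/
import Mathlib

section
/- Let M be a measurable space, let μ and ν be probability measures on M × M having the same first marginal and the same second marginal, let g : M → ℝ be bounded measurable, and let a, b ∈ ℝ. Then ∫ (g(x) − g(y))² dμ(x,y) − ∫ (g(x) − g(y))² dν(x,y) ≤ 2 ∫ ((g(x) − a)² + (g(y) − b)²) dμ(x,y). -/
open MeasureTheory

/-- If `μ` and `ν` are probability measures on `M × M` with the same first marginal and the
same second marginal, and `g` is bounded measurable, then for any reals `a, b`,
`∫ (g x − g y)² dμ − ∫ (g x − g y)² dν ≤ 2 ∫ ((g x − a)² + (g y − b)²) dμ`. -/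
theorem integral_sq_sub_le_of_same_marginals
    {M : Type*} [MeasurableSpace M]
    (μ ν : Measure (M × M)) [IsProbabilityMeasure μ] [IsProbabilityMeasure ν]
    (h_fst : μ.map Prod.fst = ν.map Prod.fst)
    (h_snd : μ.map Prod.snd = ν.map Prod.snd)
    (g : M → ℝ) (hg : Measurable g) (C : ℝ) (hgC : ∀ x, |g x| ≤ C)
    (a b : ℝ) :
    (∫ p, (g p.1 - g p.2) ^ 2 ∂μ) - ∫ p, (g p.1 - g p.2) ^ 2 ∂ν
      ≤ 2 * ∫ p, ((g p.1 - a) ^ 2 + (g p.2 - b) ^ 2) ∂μ := by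
  -- u p = (g p.1 - a) + (b - g p.2)
  set u : M × M → ℝ := fun p => (g p.1 - a) + (b - g p.2) with hu
  have hum : Measurable u :=
    ((hg.comp measurable_fst).sub_const a).add
      (measurable_const.sub (hg.comp measurable_snd))
  have key : ∀ (m : Measure (M × M)) [IsProbabilityMeasure m] (f : M × M → ℝ),
      Measurable f → ∀ D : ℝ, (∀ p, |f p| ≤ D) → Integrable f m := by
    intro m _ f hf D hD
    exact (integrable_const D).mono' hf.aestronglyMeasurable
      (Filter.Eventually.of_forall fun p => by simpa using hD p)
  have hub : ∀ p, |u p| ≤ (C + |a|) + (C + |b|) := by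
    intro p
    calc |u p| ≤ |g p.1 - a| + |b - g p.2| := abs_add_le _ _
    _ ≤ (|g p.1| + |a|) + (|b| + |g p.2|) := by
        gcongr <;> [exact abs_sub _ _; exact abs_sub _ _]
    _ ≤ (C + |a|) + (C + |b|) := by have := hgC p.1; have := hgC p.2; linarith
  have hu2b : ∀ p, |u p ^ 2| ≤ ((C + |a|) + (C + |b|)) ^ 2 := by
    intro p
    rw [abs_pow]
    exact pow_le_pow_left₀ (abs_nonneg _) (hub p) 2
  -- integrability facts
  have hif : ∀ (m : Measure (M × M)) [IsProbabilityMeasure m],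
      Integrable (fun p : M × M => g p.1) m := fun m _ =>
    key m _ (hg.comp measurable_fst) C fun p => hgC p.1
  have his : ∀ (m : Measure (M × M)) [IsProbabilityMeasure m],
      Integrable (fun p : M × M => g p.2) m := fun m _ =>
    key m _ (hg.comp measurable_snd) C fun p => hgC p.2
  have hiu : ∀ (m : Measure (M × M)) [IsProbabilityMeasure m], Integrable u m :=
    fun m _ => key m u hum _ hub
  have hiu2 : ∀ (m : Measure (M × M)) [IsProbabilityMeasure m],
      Integrable (fun p => u p ^ 2) m := fun m _ => key m _ (hum.pow_const 2) _ hu2b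
  have hisq : ∀ (m : Measure (M × M)) [IsProbabilityMeasure m],
      Integrable (fun p : M × M => (g p.1 - g p.2) ^ 2) m := by
    intro m _
    refine key m _ (((hg.comp measurable_fst).sub (hg.comp measurable_snd)).pow_const 2)
      ((C + C) ^ 2) fun p => ?_
    rw [abs_pow]
    have h1 := hgC p.1; have h2 := hgC p.2
    have : |g p.1 - g p.2| ≤ C + C := (abs_sub _ _).trans (by linarith)
    exact pow_le_pow_left₀ (abs_nonneg _) this 2
  have hrhs : Integrable (fun p : M × M => (g p.1 - a) ^ 2 + (g p.2 - b) ^ 2) μ := by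
    refine key μ _ (((hg.comp measurable_fst).sub_const a).pow_const 2 |>.add
      (((hg.comp measurable_snd).sub_const b).pow_const 2)) ((C + |a|) ^ 2 + (C + |b|) ^ 2)
      fun p => ?_
    have h1 := hgC p.1; have h2 := hgC p.2
    have ha' : |g p.1 - a| ≤ C + |a| := (abs_sub _ _).trans (by linarith)
    have hb' : |g p.2 - b| ≤ C + |b| := (abs_sub _ _).trans (by linarith)
    have e1 : (g p.1 - a) ^ 2 ≤ (C + |a|) ^ 2 := by
      rw [← sq_abs]; exact pow_le_pow_left₀ (abs_nonneg _) ha' 2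
    have e2 : (g p.2 - b) ^ 2 ≤ (C + |b|) ^ 2 := by
      rw [← sq_abs]; exact pow_le_pow_left₀ (abs_nonneg _) hb' 2
    rw [abs_of_nonneg (by positivity)]; linarith
  -- expansion: (g x - g y)^2 = u^2 + 2(a-b) u + (a-b)^2
  have expand : ∀ (m : Measure (M × M)) [IsProbabilityMeasure m],
      ∫ p, (g p.1 - g p.2) ^ 2 ∂m
        = (∫ p, u p ^ 2 ∂m) + (2 * (a - b)) * (∫ p, u p ∂m) + (a - b) ^ 2 := by
    intro m _
    have heq : ∀ p : M × M, (g p.1 - g p.2) ^ 2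
        = u p ^ 2 + (2 * (a - b)) * u p + (a - b) ^ 2 := by
      intro p; simp only [hu]; ring
    calc ∫ p, (g p.1 - g p.2) ^ 2 ∂m
        = ∫ p, (u p ^ 2 + (2 * (a - b)) * u p + (a - b) ^ 2) ∂m := by
          exact integral_congr_ae (Filter.Eventually.of_forall heq)
      _ = (∫ p, u p ^ 2 ∂m) + (2 * (a - b)) * (∫ p, u p ∂m) + (a - b) ^ 2 := by
          have i1 : Integrable (fun p => u p ^ 2 + (2 * (a - b)) * u p) m :=
            (hiu2 m).add ((hiu m).const_mul _)
          have i2 : Integrable (fun p => (2 * (a - b)) * u p) m := (hiu m).const_mul _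
          rw [integral_add i1 (integrable_const _), integral_add (hiu2 m) i2,
            integral_const_mul, integral_const]
          simp
  -- equal means of u
  have humean : ∫ p, u p ∂μ = ∫ p, u p ∂ν := by
    have h1 : ∫ p, g p.1 ∂μ = ∫ p, g p.1 ∂ν := by
      rw [← integral_map measurable_fst.aemeasurable hg.aestronglyMeasurable,
        ← integral_map measurable_fst.aemeasurable hg.aestronglyMeasurable, h_fst]
    have h2 : ∫ p, g p.2 ∂μ = ∫ p, g p.2 ∂ν := by
      rw [← integral_map measurable_snd.aemeasurable hg.aestronglyMeasurable,
        ← integral_map measurable_snd.aemeasurable hg.aestronglyMeasurable, h_snd]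
    have e : ∀ (m : Measure (M × M)) [IsProbabilityMeasure m],
        ∫ p, u p ∂m = (∫ p, g p.1 ∂m) - a + (b - ∫ p, g p.2 ∂m) := by
      intro m _
      simp only [hu]
      have i1 : Integrable (fun p : M × M => g p.1 - a) m :=
        (hif m).sub (integrable_const a)
      have i2 : Integrable (fun p : M × M => b - g p.2) m :=
        (integrable_const b).sub (his m)
      rw [integral_add i1 i2, integral_sub (hif m) (integrable_const a),
        integral_sub (integrable_const b) (his m), integral_const, integral_const]
      simp
    rw [e μ, e ν, h1, h2]
  -- pointwise bound u^2 ≤ 2 ((g x - a)^2 + (g y - b)^2)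
  have hpt : ∀ p : M × M, u p ^ 2 ≤ 2 * ((g p.1 - a) ^ 2 + (g p.2 - b) ^ 2) := by
    intro p; simp only [hu]; nlinarith [sq_nonneg ((g p.1 - a) - (b - g p.2))]
  have hnu2 : 0 ≤ ∫ p, u p ^ 2 ∂ν := integral_nonneg fun p => sq_nonneg _
  have hfin : ∫ p, u p ^ 2 ∂μ ≤ 2 * ∫ p, ((g p.1 - a) ^ 2 + (g p.2 - b) ^ 2) ∂μ := by
    rw [← integral_const_mul]
    exact integral_mono (hiu2 μ) (hrhs.const_mul 2) hpt
  rw [expand μ, expand ν, humean]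
  linarith
end

section
/- Let B be a standard Brownian motion started at 0. For every ε > 0, ∫∫_{0 < x < y < 2π} P(∃ s ∈ [0, 2ε], (y − x) + B_s ∈ {0, 2π}) dx dy ≤ 8 √π · √ε. -/
open MeasureTheory ProbabilityTheory Real

/-- A process indexed by `ℝ` has independent increments (along nonnegative times) if for every
monotone sequence of nonnegative times, the corresponding increments form an independent
family of random variables. -/
def HasIndepIncrements {Ω : Type*} [MeasurableSpace Ω] (P : Measure Ω)
    (B : ℝ → Ω → ℝ) : Prop :=
  ∀ t : ℕ → ℝ, Monotone t → 0 ≤ t 0 →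
    iIndepFun (fun n ω => B (t (n + 1)) ω - B (t n) ω) P

/-- A standard Brownian motion started at `0`: it vanishes at time `0` almost surely, has almost
surely continuous paths on `[0, ∞)`, its increments over `[s, t]` (for `0 ≤ s ≤ t`) are centered
Gaussian with variance `t - s`, and it has independent increments. -/
def IsStandardBrownianMotion {Ω : Type*} [MeasurableSpace Ω] (P : Measure Ω)
    (B : ℝ → Ω → ℝ) : Prop :=
  (∀ᵐ ω ∂P, B 0 ω = 0) ∧
  (∀ᵐ ω ∂P, ContinuousOn (fun t => B t ω) (Set.Ici 0)) ∧
  (∀ s t : ℝ, 0 ≤ s → s ≤ t →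
    P.map (fun ω => B t ω - B s ω) = gaussianReal 0 (t - s).toNNReal) ∧
  HasIndepIncrements P B

/-!
Started at `u = y - x ∈ (0, 2π)`, the path `u + B` can only reach `0` or `2π` before time `2ε` if
`-B` climbs to level `u` or `B` climbs to level `2π - u`. By the reflection principle each of these
has probability at most `2 P(B_{2ε} ≥ level)`: for the path sampled on a dyadic grid this is Lévy's
inequality for partial sums of independent symmetric increments, and continuity of the paths
passes it to the whole interval `[0, 2ε]`. For fixed `x`, both tails integrate in `y` to at most
`∫_0^∞ 2 P(B_{2ε} ≥ z) dz = 2 E[B_{2ε}⁺] = 2 √(ε / π)`, and integrating over `x ∈ (0, 2π)` gives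
`2π · 4 √(ε / π) = 8 √π √ε`.
-/

open Set Filter Topology
open scoped NNReal ENNReal

lemma integral_Ioi_mul_exp_neg_mul_sq {b : ℝ} (hb : 0 < b) :
    ∫ x in Ioi (0 : ℝ), x * exp (-b * x ^ 2) = (2 * b)⁻¹ := by
  have h := integral_mul_cexp_neg_mul_sq (b := b) (by simpa using hb)
  exact_mod_cast h

lemma lintegral_Ioi_gaussianReal_Ici {v : ℝ≥0} (hv : v ≠ 0) :
    ∫⁻ u in Ioi (0 : ℝ), gaussianReal 0 v (Ici u) = ENNReal.ofReal (√(v / (2 * π))) := by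
  have hv' : (0 : ℝ) < v := by positivity
  have hlayer := lintegral_eq_lintegral_meas_le ((gaussianReal 0 v).restrict (Ioi 0))
    (ae_restrict_of_forall_mem measurableSet_Ioi fun x hx => le_of_lt hx) aemeasurable_id
  have hdensity : ∀ x ∈ Ioi (0 : ℝ), gaussianPDF 0 v x * ENNReal.ofReal x
      = ENNReal.ofReal ((√(2 * π * v))⁻¹ * (x * exp (-(2 * (v : ℝ))⁻¹ * x ^ 2))) := by
    intro x _
    rw [gaussianPDF, ← ENNReal.ofReal_mul (gaussianPDFReal_nonneg _ _ _), gaussianPDFReal,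
      sub_zero]
    congr 1
    field_simp
  have hint : IntegrableOn (fun x => (√(2 * π * v))⁻¹ * (x * exp (-(2 * (v : ℝ))⁻¹ * x ^ 2)))
      (Ioi 0) := ((integrable_mul_exp_neg_mul_sq (by positivity)).const_mul _).integrableOn
  calc ∫⁻ u in Ioi (0 : ℝ), gaussianReal 0 v (Ici u)
      = ∫⁻ u in Ioi (0 : ℝ), ((gaussianReal 0 v).restrict (Ioi 0)) (Ici u) :=
        setLIntegral_congr_fun measurableSet_Ioi fun u (hu : 0 < u) => by
          rw [Measure.restrict_apply measurableSet_Ici, inter_eq_left.2 (Ici_subset_Ioi.2 hu)]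
    _ = ∫⁻ x in Ioi 0, ENNReal.ofReal x ∂gaussianReal 0 v := hlayer.symm
    _ = ∫⁻ x in Ioi 0, gaussianPDF 0 v x * ENNReal.ofReal x := by
        rw [gaussianReal_of_var_ne_zero 0 hv,
          setLIntegral_withDensity_eq_setLIntegral_mul _ (measurable_gaussianPDF 0 v)
            ENNReal.measurable_ofReal measurableSet_Ioi]
        rfl
    _ = ENNReal.ofReal (∫ x in Ioi 0, (√(2 * π * v))⁻¹ * (x * exp (-(2 * (v : ℝ))⁻¹ * x ^ 2))) := by
        rw [setLIntegral_congr_fun measurableSet_Ioi hdensity,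
          ofReal_integral_eq_lintegral_ofReal hint
            (ae_restrict_of_forall_mem measurableSet_Ioi fun x (hx : 0 < x) => by positivity)]
    _ = ENNReal.ofReal (√(v / (2 * π))) := by
        rw [integral_const_mul, integral_Ioi_mul_exp_neg_mul_sq (by positivity)]
        congr 1
        rw [sqrt_mul' _ hv'.le, sqrt_div' _ (by positivity)]
        field_simp
        rw [sq_sqrt hv'.le]

section IndependentIncrements

variable {Ω : Type*} {mΩ : MeasurableSpace Ω} {P : Measure Ω}

lemma ProbabilityTheory.Indep.measure_le_two_mul_measure_inter {m₁ m₂ : MeasurableSpace Ω}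
    (h : Indep m₁ m₂ P) (hm₂ : m₂ ≤ mΩ) {E F : Set Ω} (hE : MeasurableSet[m₁] E)
    (hF : MeasurableSet[m₂] F) (hsymm : P Fᶜ ≤ P F) : P E ≤ 2 * P (E ∩ F) := by
  have hmul := (Indep_iff m₁ m₂ P).1 h
  calc P E = P (E ∩ F) + P (E ∩ Fᶜ) := (measure_inter_add_sdiff E (hm₂ _ hF)).symm
    _ = P (E ∩ F) + P E * P Fᶜ := by rw [hmul _ _ hE hF.compl]
    _ ≤ P (E ∩ F) + P E * P F := by gcongr
    _ = 2 * P (E ∩ F) := by rw [← hmul _ _ hE hF, two_mul]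

lemma measurable_sum_iSup_comap {ι : Type*} {Y : ι → Ω → ℝ} {S : Set ι} {s : Finset ι}
    (hs : ∀ i ∈ s, i ∈ S) :
    Measurable[⨆ i ∈ S, MeasurableSpace.comap (Y i) inferInstance] fun ω => ∑ i ∈ s, Y i ω :=
  Finset.measurable_sum _ fun i hi => (comap_measurable (Y i)).mono
    (le_iSup₂ (f := fun i (_ : i ∈ S) => MeasurableSpace.comap (Y i) inferInstance) i (hs i hi))
    le_rfl

lemma measure_biUnion_le_two_mul_of_disjointed {E : ℕ → Set Ω} {F : Set Ω}
    (hE : ∀ k, MeasurableSet (E k)) (hF : MeasurableSet F) (N : ℕ)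
    (h : ∀ k ≤ N, P (disjointed E k) ≤ 2 * P (disjointed E k ∩ F)) :
    P (⋃ k ≤ N, E k) ≤ 2 * P F := by
  have hdisj : (Finset.Iic N : Set ℕ).PairwiseDisjoint (disjointed E) :=
    (disjoint_disjointed E).set_pairwise _
  have hunion : ⋃ k ≤ N, E k = ⋃ k ∈ Finset.Iic N, disjointed E k := by
    rw [biUnion_Iic_disjointed, partialSups_eq_biSup]
    rfl
  calc P (⋃ k ≤ N, E k) = ∑ k ∈ Finset.Iic N, P (disjointed E k) := by
        rw [hunion, measure_biUnion_finset hdisj fun k _ => MeasurableSet.disjointed hE k]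
    _ ≤ ∑ k ∈ Finset.Iic N, 2 * P (disjointed E k ∩ F) :=
        Finset.sum_le_sum fun k hk => h k (Finset.mem_Iic.1 hk)
    _ = 2 * P (⋃ k ∈ Finset.Iic N, disjointed E k ∩ F) := by
        rw [← Finset.mul_sum, measure_biUnion_finset (hdisj.mono fun k => inter_subset_left)
          fun k _ => (MeasurableSet.disjointed hE k).inter hF]
    _ ≤ 2 * P F := by
        gcongr
        exact iUnion₂_subset fun k _ => inter_subset_right

theorem measure_exists_le_sum_range_le {Y : ℕ → Ω → ℝ} (hY : ∀ i, Measurable (Y i))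
    (hind : iIndepFun Y P) (N : ℕ)
    (hsymm : ∀ k ≤ N, P {ω | ∑ i ∈ Finset.Ico k N, Y i ω < 0}
      ≤ P {ω | 0 ≤ ∑ i ∈ Finset.Ico k N, Y i ω}) (a : ℝ) :
    P {ω | ∃ k ≤ N, a ≤ ∑ i ∈ Finset.range k, Y i ω}
      ≤ 2 * P {ω | a ≤ ∑ i ∈ Finset.range N, Y i ω} := by
  set E : ℕ → Set Ω := fun k => {ω | a ≤ ∑ i ∈ Finset.range k, Y i ω}
  have hE : ∀ k, MeasurableSet (E k) := fun k =>
    measurableSet_le measurable_const (Finset.measurable_sum _ fun i _ => hY i)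
  -- `disjointed E k` is the event that the partial sums reach `a` for the first time at step `k`
  have hpast : ∀ k, MeasurableSet[⨆ i ∈ Iio k, MeasurableSpace.comap (Y i) inferInstance]
      (disjointed E k) := by
    intro k
    have hEj : ∀ j ≤ k, MeasurableSet[⨆ i ∈ Iio k, MeasurableSpace.comap (Y i) inferInstance]
        (E j) := fun j hj => measurableSet_le measurable_const
      (measurable_sum_iSup_comap fun i hi => (Finset.mem_range.1 hi).trans_le hj)
    rw [disjointed_eq_inter_compl]
    exact (hEj k le_rfl).inter (.biInter (to_countable _) fun j hj => (hEj j (le_of_lt hj)).compl)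
  have hfirst : ∀ k ≤ N, P (disjointed E k) ≤ 2 * P (disjointed E k ∩ E N) := by
    intro k hk
    have hindep := indep_iSup_of_disjoint (fun i => (hY i).comap_le)
      ((iIndepFun_iff_iIndep _ _ _).1 hind) (Iio_disjoint_Ici (le_refl k))
    have hfuture : MeasurableSet[⨆ i ∈ Ici k, MeasurableSpace.comap (Y i) inferInstance]
        {ω | 0 ≤ ∑ i ∈ Finset.Ico k N, Y i ω} := measurableSet_le measurable_const
      (measurable_sum_iSup_comap fun i hi => (Finset.mem_Ico.1 hi).1)
    refine (hindep.measure_le_two_mul_measure_inter (iSup₂_le fun i _ => (hY i).comap_le)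
      (hpast k) hfuture ?_).trans ?_
    · simpa only [compl_ofPred, not_le] using hsymm k hk
    · gcongr 2 * P ?_
      refine fun ω hω => ⟨hω.1, ?_⟩
      have hS : a ≤ ∑ i ∈ Finset.range k, Y i ω := disjointed_subset E k hω.1
      have hΔ : 0 ≤ ∑ i ∈ Finset.Ico k N, Y i ω := hω.2
      show a ≤ ∑ i ∈ Finset.range N, Y i ω
      rw [← Finset.sum_range_add_sum_Ico _ hk]
      linarith
  have hunion : {ω | ∃ k ≤ N, a ≤ ∑ i ∈ Finset.range k, Y i ω} = ⋃ k ≤ N, E k := by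
    ext ω
    simp [E]
  rw [hunion]
  exact measure_biUnion_le_two_mul_of_disjointed hE (hE N) N hfirst

theorem measure_exists_le_le_of_iIndepFun_sub {Z : ℕ → Ω → ℝ} (hZ0 : ∀ᵐ ω ∂P, Z 0 ω = 0)
    (hmeas : ∀ k, AEMeasurable (fun ω => Z (k + 1) ω - Z k ω) P)
    (hind : iIndepFun (fun k ω => Z (k + 1) ω - Z k ω) P) (N : ℕ)
    (hsymm : ∀ k ≤ N, P {ω | Z N ω - Z k ω < 0} ≤ P {ω | 0 ≤ Z N ω - Z k ω}) (a : ℝ) :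
    P {ω | ∃ k ≤ N, a ≤ Z k ω} ≤ 2 * P {ω | a ≤ Z N ω} := by
  obtain ⟨Y, hYm, hZY⟩ : ∃ Y : ℕ → Ω → ℝ, (∀ k, Measurable (Y k)) ∧
      ∀ k, (fun ω => Z (k + 1) ω - Z k ω) =ᵐ[P] Y k :=
    ⟨fun k => (hmeas k).mk _, fun k => (hmeas k).measurable_mk, fun k => (hmeas k).ae_eq_mk⟩
  have hsum : ∀ᵐ ω ∂P, ∀ k, ∑ i ∈ Finset.range k, Y i ω = Z k ω := by
    filter_upwards [hZ0, ae_all_iff.2 hZY] with ω h0 hY k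
    simp only [← hY, Finset.sum_range_sub (fun i => Z i ω), h0, sub_zero]
  have hsum_Ico : ∀ᵐ ω ∂P, ∀ k ≤ N, ∑ i ∈ Finset.Ico k N, Y i ω = Z N ω - Z k ω := by
    filter_upwards [hsum] with ω hω k hk
    rw [Finset.sum_Ico_eq_sub _ hk, hω, hω]
  have hlevy := measure_exists_le_sum_range_le hYm ((iIndepFun_congr hZY).1 hind) N
    (fun k hk => by
      convert hsymm k hk using 1 <;> refine measure_congr (eventuallyEq_set.2 ?_) <;>
        filter_upwards [hsum_Ico] with ω hω <;> simp only [hω k hk]) a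
  calc P {ω | ∃ k ≤ N, a ≤ Z k ω}
      = P {ω | ∃ k ≤ N, a ≤ ∑ i ∈ Finset.range k, Y i ω} :=
        measure_congr (eventuallyEq_set.2 (by
          filter_upwards [hsum] with ω hω; simp only [hω]))
    _ ≤ 2 * P {ω | a ≤ ∑ i ∈ Finset.range N, Y i ω} := hlevy
    _ = 2 * P {ω | a ≤ Z N ω} := by
        congr 1
        exact measure_congr (eventuallyEq_set.2 (by
          filter_upwards [hsum] with ω hω; simp only [hω]))

end IndependentIncrements

lemma exists_dyadic_lt_of_continuousWithinAt {f : ℝ → ℝ} {T s a : ℝ} (hT : 0 < T)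
    (hs : s ∈ Icc 0 T) (hf : ContinuousWithinAt f (Ici 0) s) (ha : a < f s) :
    ∃ n j : ℕ, j ≤ 2 ^ n ∧ a < f (j * (T / 2 ^ n)) := by
  obtain ⟨d, hd, hball⟩ := Metric.mem_nhdsWithin_iff.1 (hf (Ioi_mem_nhds ha))
  obtain ⟨n, hn⟩ := exists_pow_lt_of_lt_one (div_pos hd hT) one_half_lt_one
  set c := T / 2 ^ n
  have hc : 0 < c := by positivity
  have hcd : c < d := by
    calc c = T * (1 / 2) ^ n := by rw [one_div_pow, mul_one_div]
      _ < T * (d / T) := by gcongr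
      _ = d := mul_div_cancel₀ d hT.ne'
  have hjs : ⌊s / c⌋₊ * c ≤ s := (le_div_iff₀ hc).1 (Nat.floor_le (div_nonneg hs.1 hc.le))
  have hsj : s < ⌊s / c⌋₊ * c + c := by
    rw [← add_one_mul, ← div_lt_iff₀ hc]
    exact Nat.lt_floor_add_one _
  refine ⟨n, ⌊s / c⌋₊, Nat.floor_le_of_le ?_, hball ⟨?_, ?_⟩⟩
  · rw [div_le_iff₀ hc, Nat.cast_pow, Nat.cast_ofNat, mul_div_cancel₀ T (by positivity)]
    exact hs.2
  · rw [Metric.mem_ball, Real.dist_eq, abs_sub_comm, abs_of_nonneg (by linarith)]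
    linarith
  · exact mul_nonneg (Nat.cast_nonneg _) hc.le

lemma setLIntegral_Ioo_comp_sub_le (g : ℝ → ℝ≥0∞) (a b : ℝ) :
    ∫⁻ y in Ioo a b, g (y - a) ≤ ∫⁻ u in Ioi 0, g u :=
  calc ∫⁻ y in Ioo a b, g (y - a) = ∫⁻ y in Ioo a b, (Ioi 0).indicator g (y - a) :=
        setLIntegral_congr_fun measurableSet_Ioo fun y hy =>
          (indicator_of_mem (sub_pos.2 hy.1) g).symm
    _ ≤ ∫⁻ y, (Ioi 0).indicator g (y - a) := setLIntegral_le_lintegral _ _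
    _ = ∫⁻ u in Ioi 0, g u := by
        rw [lintegral_sub_right_eq_self, lintegral_indicator measurableSet_Ioi]

lemma setLIntegral_Ioo_comp_const_sub_le (g : ℝ → ℝ≥0∞) {a b c : ℝ} (hbc : b ≤ c) :
    ∫⁻ y in Ioo a b, g (c - y) ≤ ∫⁻ u in Ioi 0, g u :=
  calc ∫⁻ y in Ioo a b, g (c - y) = ∫⁻ y in Ioo a b, (Ioi 0).indicator g (c - y) :=
        setLIntegral_congr_fun measurableSet_Ioo fun y hy =>
          (indicator_of_mem (sub_pos.2 (hy.2.trans_le hbc)) g).symm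
    _ ≤ ∫⁻ y, (Ioi 0).indicator g (c - y) := setLIntegral_le_lintegral _ _
    _ = ∫⁻ u in Ioi 0, g u := by
        rw [lintegral_sub_left_eq_self, lintegral_indicator measurableSet_Ioi]

section BrownianMotion

variable {Ω : Type*} {mΩ : MeasurableSpace Ω} {P : Measure Ω} {B : ℝ → Ω → ℝ}

lemma measure_neg_le_measure_nonneg_of_map_eq_gaussianReal {f : Ω → ℝ} {v : ℝ≥0}
    (hf : P.map f = gaussianReal 0 v) : P {ω | f ω < 0} ≤ P {ω | 0 ≤ f ω} := by
  have hf_meas : AEMeasurable f P := aemeasurable_of_map_neZero (by rw [hf]; infer_instance)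
  have hsymm : gaussianReal 0 v (Iio 0) = gaussianReal 0 v (Ioi 0) := by
    conv_lhs => rw [← neg_zero, ← gaussianReal_map_neg]
    rw [Measure.map_apply measurable_neg measurableSet_Iio]
    simp
  calc P {ω | f ω < 0} = gaussianReal 0 v (Iio 0) := by
        rw [← hf, Measure.map_apply_of_aemeasurable hf_meas measurableSet_Iio]; rfl
    _ ≤ gaussianReal 0 v (Ici 0) := hsymm ▸ measure_mono Ioi_subset_Ici_self
    _ = P {ω | 0 ≤ f ω} := by
        rw [← hf, Measure.map_apply_of_aemeasurable hf_meas measurableSet_Ici]; rfl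

namespace IsStandardBrownianMotion

lemma neg (hB : IsStandardBrownianMotion P B) : IsStandardBrownianMotion P (fun t ω => -B t ω) := by
  obtain ⟨h0, hcont, hlaw, hinc⟩ := hB
  refine ⟨?_, ?_, fun s t hs hst => ?_, fun t ht ht0 => ?_⟩
  · filter_upwards [h0] with ω h
    simp [h]
  · filter_upwards [hcont] with ω h
    exact h.neg
  · have hmeas : AEMeasurable (fun ω => B t ω - B s ω) P :=
      aemeasurable_of_map_neZero (by rw [hlaw s t hs hst]; infer_instance)
    calc P.map (fun ω => -B t ω - -B s ω) = (P.map (fun ω => B t ω - B s ω)).map (fun x => -x) := by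
          rw [AEMeasurable.map_map_of_aemeasurable measurable_neg.aemeasurable hmeas]
          congr 1
          ext ω
          simp only [Function.comp_apply]
          ring
      _ = gaussianReal 0 (t - s).toNNReal := by rw [hlaw s t hs hst, gaussianReal_map_neg, neg_zero]
  · convert (hinc t ht ht0).comp (fun _ x => -x) fun _ => measurable_neg using 2
    ext ω
    simp only [Function.comp_apply]
    ring

lemma map_eq_gaussianReal (hB : IsStandardBrownianMotion P B) {t : ℝ} (ht : 0 ≤ t) :
    P.map (B t) = gaussianReal 0 t.toNNReal := by
  rw [Measure.map_congr (g := fun ω => B t ω - B 0 ω), hB.2.2.1 0 t le_rfl ht, sub_zero]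
  filter_upwards [hB.1] with ω h
  simp [h]

lemma measure_exists_le_at_mul_le (hB : IsStandardBrownianMotion P B) {δ : ℝ} (hδ : 0 ≤ δ)
    (N : ℕ) (a : ℝ) :
    P {ω | ∃ j ≤ N, a ≤ B (j * δ) ω} ≤ 2 * gaussianReal 0 (N * δ).toNNReal (Ici a) := by
  have hlaw : ∀ j k : ℕ, j ≤ k → P.map (fun ω => B (k * δ) ω - B (j * δ) ω)
      = gaussianReal 0 (k * δ - j * δ).toNNReal := fun j k hjk =>
    hB.2.2.1 _ _ (by positivity) (by gcongr)
  have hNδ := hB.map_eq_gaussianReal (t := N * δ) (by positivity)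
  calc P {ω | ∃ j ≤ N, a ≤ B (j * δ) ω} ≤ 2 * P {ω | a ≤ B (N * δ) ω} :=
        measure_exists_le_le_of_iIndepFun_sub (Z := fun j => B (j * δ)) (by simpa using hB.1)
          (fun k => aemeasurable_of_map_neZero (by rw [hlaw k (k + 1) (by omega)]; infer_instance))
          (hB.2.2.2 (fun j => j * δ) (fun i j h => by dsimp only; gcongr) (by simp)) N
          (fun k hk => measure_neg_le_measure_nonneg_of_map_eq_gaussianReal (hlaw k N hk)) a
    _ = 2 * gaussianReal 0 (N * δ).toNNReal (Ici a) := by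
        rw [← hNδ, Measure.map_apply_of_aemeasurable
          (aemeasurable_of_map_neZero (by rw [hNδ]; infer_instance)) measurableSet_Ici]
        rfl

lemma measure_exists_lt_le (hB : IsStandardBrownianMotion P B) {T : ℝ} (hT : 0 < T) (a : ℝ) :
    P {ω | ∃ s ∈ Icc 0 T, a < B s ω} ≤ 2 * gaussianReal 0 T.toNNReal (Ici a) := by
  set G : ℕ → Set Ω := fun n => {ω | ∃ j : ℕ, j ≤ 2 ^ n ∧ a ≤ B (j * (T / 2 ^ n)) ω}
  have hG : Monotone G := monotone_nat_of_le_succ fun n ω ⟨j, hj, h⟩ =>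
    ⟨2 * j, by omega, by
      rwa [show ((2 * j : ℕ) : ℝ) * (T / 2 ^ (n + 1)) = j * (T / 2 ^ n) by
        push_cast; rw [pow_succ]; field_simp]⟩
  have hsub : {ω | ∃ s ∈ Icc 0 T, a < B s ω} ≤ᵐ[P] ⋃ n, G n := by
    filter_upwards [hB.2.1] with ω hω ⟨s, hs, h⟩
    obtain ⟨n, j, hj, hlt⟩ := exists_dyadic_lt_of_continuousWithinAt hT hs (hω s hs.1) h
    exact mem_iUnion.2 ⟨n, j, hj, hlt.le⟩
  calc _ ≤ P (⋃ n, G n) := measure_mono_ae hsub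
    _ = ⨆ n, P (G n) := hG.measure_iUnion
    _ ≤ _ := iSup_le fun n => by
        have := hB.measure_exists_le_at_mul_le (δ := T / 2 ^ n) (by positivity) (2 ^ n) a
        rwa [Nat.cast_pow, Nat.cast_ofNat, mul_div_cancel₀ T (by positivity)] at this

lemma measure_exists_le_le (hB : IsStandardBrownianMotion P B) {T : ℝ} (hT : 0 < T) (a : ℝ) :
    P {ω | ∃ s ∈ Icc 0 T, a ≤ B s ω} ≤ 2 * gaussianReal 0 T.toNNReal (Ici a) := by
  have hinter : ⋂ r > (0 : ℝ), Ici (a - r) = Ici a := by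
    ext x
    simp only [mem_iInter, mem_Ici, sub_le_iff_le_add]
    exact ⟨le_of_forall_pos_le_add, fun h r hr => by linarith⟩
  have hlim : Tendsto (fun r => 2 * gaussianReal 0 T.toNNReal (Ici (a - r))) (𝓝[>] 0)
      (𝓝 (2 * gaussianReal 0 T.toNNReal (Ici a))) := by
    refine ENNReal.Tendsto.const_mul ?_ (Or.inr ENNReal.ofNat_ne_top)
    rw [← hinter]
    exact tendsto_measure_biInter_gt (fun r _ => measurableSet_Ici.nullMeasurableSet)
      (fun i j _ hij => Ici_subset_Ici.2 (by linarith)) ⟨1, one_pos, measure_ne_top _ _⟩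
  refine ge_of_tendsto hlim (eventually_nhdsWithin_of_forall fun r (hr : 0 < r) => ?_)
  refine (measure_mono ?_).trans (hB.measure_exists_lt_le hT (a - r))
  rintro ω ⟨s, hs, h⟩
  exact ⟨s, hs, by linarith⟩

lemma measure_exists_add_mem_pair_le (hB : IsStandardBrownianMotion P B) {T : ℝ} (hT : 0 < T)
    (u L : ℝ) :
    P {ω | ∃ s ∈ Icc 0 T, u + B s ω ∈ ({0, L} : Set ℝ)}
      ≤ 2 * gaussianReal 0 T.toNNReal (Ici u) + 2 * gaussianReal 0 T.toNNReal (Ici (L - u)) := by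
  calc _ ≤ P ({ω | ∃ s ∈ Icc 0 T, u ≤ -B s ω} ∪ {ω | ∃ s ∈ Icc 0 T, L - u ≤ B s ω}) := by
        refine measure_mono fun ω ⟨s, hs, h⟩ => ?_
        rcases h with h | h
        · exact Or.inl ⟨s, hs, by linarith⟩
        · exact Or.inr ⟨s, hs, by linarith [mem_singleton_iff.1 h]⟩
    _ ≤ _ := (measure_union_le _ _).trans
        (add_le_add (hB.neg.measure_exists_le_le hT u) (hB.measure_exists_le_le hT (L - u)))

end IsStandardBrownianMotion

end BrownianMotion

theorem integrated_exit_estimate_general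
    {Ω : Type*} [MeasurableSpace Ω] (P : Measure Ω)
    (B : ℝ → Ω → ℝ) (hB : IsStandardBrownianMotion P B)
    (ε : ℝ) (hε : 0 < ε) :
    (∫⁻ x in Set.Ioo (0 : ℝ) (2 * π), ∫⁻ y in Set.Ioo x (2 * π),
        P {ω | ∃ s ∈ Set.Icc (0 : ℝ) (2 * ε), (y - x) + B s ω ∈ ({0, 2 * π} : Set ℝ)})
      ≤ ENNReal.ofReal (8 * Real.sqrt π * Real.sqrt ε) := by
  set g : ℝ → ℝ≥0∞ := fun u => 2 * gaussianReal 0 (2 * ε).toNNReal (Ici u)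
  have htail_meas : Measurable fun u => gaussianReal 0 (2 * ε).toNNReal (Ici u) :=
    Antitone.measurable fun u v huv => measure_mono (Ici_subset_Ici.2 huv)
  have hg : Measurable g := htail_meas.const_mul 2
  have htail : ∫⁻ u in Ioi 0, g u = 2 * ENNReal.ofReal (√(ε / π)) := by
    rw [lintegral_const_mul _ htail_meas,
      lintegral_Ioi_gaussianReal_Ici (by simpa using hε), Real.coe_toNNReal _ (by positivity)]
    congr 3
    field_simp
  calc _ ≤ ∫⁻ x in Ioo 0 (2 * π), ∫⁻ y in Ioo x (2 * π), (g (y - x) + g (2 * π + x - y)) := by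
        gcongr with x y
        simpa only [sub_sub_eq_add_sub] using
          hB.measure_exists_add_mem_pair_le (by positivity) (y - x) (2 * π)
    _ ≤ ∫⁻ x in Ioo 0 (2 * π), 2 * ∫⁻ u in Ioi 0, g u := by
        refine setLIntegral_mono measurable_const fun x hx => ?_
        have hgx : Measurable fun y => g (y - x) := hg.comp (measurable_sub_const x)
        rw [lintegral_add_left hgx]
        exact (add_le_add (setLIntegral_Ioo_comp_sub_le g x _)
          (setLIntegral_Ioo_comp_const_sub_le g (by linarith [hx.1]))).trans_eq (two_mul _).symm
    _ = ENNReal.ofReal (8 * √π * √ε) := by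
        rw [setLIntegral_const, htail, Real.volume_Ioo, ← ENNReal.ofReal_ofNat 2,
          ← ENNReal.ofReal_mul zero_le_two, ← ENNReal.ofReal_mul zero_le_two,
          ← ENNReal.ofReal_mul (by positivity), sqrt_div' _ pi_pos.le]
        congr 1
        field_simp
        rw [sq_sqrt pi_pos.le]
        ring

/-- Integrated exit estimate (Lemma 4): for a standard Brownian motion `B` started at `0`,
`∫∫_{0 < x < y < 2π} P(∃ s ∈ [0, 2ε], (y − x) + B_s ∈ {0, 2π}) dx dy ≤ 8 √π √ε`. -/
theorem integrated_exit_estimate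
    {Ω : Type*} [MeasurableSpace Ω] (P : Measure Ω) [IsProbabilityMeasure P]
    (B : ℝ → Ω → ℝ) (hB : IsStandardBrownianMotion P B)
    (ε : ℝ) (hε : 0 < ε) :
    (∫⁻ x in Set.Ioo (0 : ℝ) (2 * π), ∫⁻ y in Set.Ioo x (2 * π),
        P {ω | ∃ s ∈ Set.Icc (0 : ℝ) (2 * ε), (y - x) + B s ω ∈ ({0, 2 * π} : Set ℝ)})
      ≤ ENNReal.ofReal (8 * Real.sqrt π * Real.sqrt ε) :=
  integrated_exit_estimate_general P B hB ε hε
end
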